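/- arXiv:1411.1463 — 3 statements merged into one kernel-verified Lean document; each statement's English description precedes it below -/
import Mathlib

section
/- Let q ≥ 3 and w* = (q-1)/(q-2). The laws of the weighted-insertion colorings with parameters (q, w*) on integer intervals are consistent: if [a,b] ⊆ [A,B], then the restriction of the WI coloring on [A,B] to [a,b] is equal in law to the WI coloring on [a,b]. -/
open scoped Classical

/-- The probability mass function of the weighted-insertion coloring with `q`
colors `{0,…,q-1}` and weight `w` on `n` positions.  It is built iteratively:
a single position receives a uniform color; a coloring of length `n+1` arises
from a coloring of length `n` by inserting a new color at a random gap
(endpoint gaps weighted `w`, interior gaps weighted `1`), the inserted color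
chosen uniformly among the colors differing from both current neighbours of
the gap (`q-1` choices at an endpoint, `q-2` in the interior).  Summing over
the position of the last insertion yields the recursion used here. -/
noncomputable def wiC (q : ℕ) (w : ℝ) : ℕ → List ℕ → ℝ
  | 0, l => if l = [] then 1 else 0
  | 1, l => if l.length = 1 ∧ l.getD 0 0 < q then 1 / (q : ℝ) else 0
  | (n + 2), l =>
      if l.length = n + 2 ∧ l.Chain' (· ≠ ·) ∧ ∀ c ∈ l, c < q then
        ∑ i ∈ Finset.range (n + 2),
          ((if i = 0 ∨ i = n + 1 then w / ((q : ℝ) - 1) else 1 / ((q : ℝ) - 2)) /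
              (2 * w + (n : ℝ))) *
            wiC q w (n + 1) (l.eraseIdx i)
      else 0

/-- All sequences of `n` colors from `{0,…,q-1}`, as lists. -/
noncomputable def colorings (q n : ℕ) : Finset (List ℕ) :=
  Finset.image (fun f : Fin n → Fin q => List.ofFn fun i => (f i : ℕ)) Finset.univ

lemma wiC_zero_of (q : ℕ) (w : ℝ) (n : ℕ) (hn : 1 ≤ n) (l : List ℕ)
    (h : ¬(l.length = n ∧ l.Chain' (· ≠ ·) ∧ ∀ c ∈ l, c < q)) : wiC q w n l = 0 := by
  match n, hn with
  | 1, _ =>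
    rw [wiC]
    rw [if_neg]
    rintro ⟨h1, h2⟩
    obtain ⟨a, rfl⟩ := List.length_eq_one_iff.mp h1
    simp at h2
    exact h ⟨rfl, List.isChain_singleton a, by simpa using h2⟩
  | (n+2), _ =>
    rw [wiC, if_neg h]

lemma wiC_two (q : ℕ) (hq : 3 ≤ q) (n : ℕ) (l : List ℕ) :
    wiC q (((q : ℝ) - 1) / ((q : ℝ) - 2)) (n + 2) l =
      if l.length = n + 2 ∧ l.Chain' (· ≠ ·) ∧ ∀ c ∈ l, c < q then
        (∑ i ∈ Finset.range (n + 2),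
            wiC q (((q : ℝ) - 1) / ((q : ℝ) - 2)) (n + 1) (l.eraseIdx i)) /
          (2 * ((q : ℝ) - 1) + n * ((q : ℝ) - 2))
      else 0 := by
  have hq1 : (q : ℝ) - 1 ≠ 0 := by
    have : (3:ℝ) ≤ (q:ℝ) := by exact_mod_cast hq
    nlinarith
  have hq2 : (q : ℝ) - 2 ≠ 0 := by
    have : (3:ℝ) ≤ (q:ℝ) := by exact_mod_cast hq
    nlinarith
  rw [wiC]
  split
  · rw [Finset.sum_div]
    apply Finset.sum_congr rfl
    intro i _
    have hcoef : (if i = 0 ∨ i = n + 1 then (((q : ℝ) - 1) / ((q : ℝ) - 2)) / ((q : ℝ) - 1)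
          else 1 / ((q : ℝ) - 2)) / (2 * (((q : ℝ) - 1) / ((q : ℝ) - 2)) + (n : ℝ))
        = 1 / (2 * ((q : ℝ) - 1) + n * ((q : ℝ) - 2)) := by
      have h1 : (((q : ℝ) - 1) / ((q : ℝ) - 2)) / ((q : ℝ) - 1) = 1 / ((q:ℝ) - 2) := by
        field_simp
      rw [if_congr Iff.rfl h1 rfl, ite_self]
      rw [div_div]
      congr 1
      field_simp
      try ring
    rw [hcoef]
    try ring
  · rfl

lemma wiC_cons_sum (q : ℕ) (hq : 3 ≤ q) :
    ∀ m : ℕ, 1 ≤ m → ∀ x : List ℕ, x.length = m →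
      ∑ c ∈ Finset.range q, wiC q (((q : ℝ) - 1) / ((q : ℝ) - 2)) (m + 1) (c :: x)
        = wiC q (((q : ℝ) - 1) / ((q : ℝ) - 2)) m x := by
  have hq3 : (3:ℝ) ≤ (q:ℝ) := by exact_mod_cast hq
  have hq2 : (q : ℝ) - 2 ≠ 0 := by nlinarith
  have hq1 : (q : ℝ) - 1 ≠ 0 := by nlinarith
  set W : ℝ := ((q : ℝ) - 1) / ((q : ℝ) - 2) with hWdef
  intro m
  induction m with
  | zero => intro h; omega
  | succ k ih =>
    intro _ x hx
    match k, ih with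
    | 0, _ =>
      -- base case : x = [a]
      obtain ⟨a, rfl⟩ := List.length_eq_one_iff.mp hx
      show ∑ c ∈ Finset.range q, wiC q W (0 + 2) (c :: [a]) = wiC q W 1 [a]
      by_cases ha : a < q
      · have key : ∀ c ∈ Finset.range q, wiC q W (0 + 2) (c :: [a]) =
            if c = a then 0 else (2 / (q:ℝ)) / (2 * ((q : ℝ) - 1) + (0:ℕ) * ((q : ℝ) - 2)) := by
          intro c hc
          rw [Finset.mem_range] at hc
          rw [wiC_two q hq 0]
          by_cases hca : c = a
          · subst hca
            rw [if_pos rfl, if_neg]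
            rintro ⟨-, hch, -⟩
            exact (List.isChain_cons_cons.mp hch).1 rfl
          · rw [if_neg hca, if_pos ⟨rfl, List.isChain_cons_cons.mpr ⟨hca, List.isChain_singleton a⟩,
              by simp [hc, ha]⟩]
            congr 1
            rw [Finset.sum_range_succ, Finset.sum_range_succ, Finset.sum_range_zero]
            simp only [List.eraseIdx_cons_zero, List.eraseIdx_cons_succ]
            rw [wiC, wiC, if_pos ⟨rfl, by simpa using ha⟩, if_pos ⟨rfl, by simpa using hc⟩]
            ring
        rw [Finset.sum_congr rfl key]
        have key2 : ∀ c ∈ Finset.range q,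
            (if c = a then 0 else (2 / (q:ℝ)) / (2 * ((q : ℝ) - 1) + (0:ℕ) * ((q : ℝ) - 2)))
            = (2 / (q:ℝ)) / (2 * ((q : ℝ) - 1) + (0:ℕ) * ((q : ℝ) - 2))
              - (if c = a then (2 / (q:ℝ)) / (2 * ((q : ℝ) - 1) + (0:ℕ) * ((q : ℝ) - 2)) else 0) := by
          intro c _
          by_cases hca : c = a <;> simp [hca]
        rw [Finset.sum_congr rfl key2, Finset.sum_sub_distrib, Finset.sum_const,
          Finset.sum_ite_eq' (Finset.range q) a, if_pos (Finset.mem_range.mpr ha),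
          Finset.card_range]
        rw [wiC, if_pos ⟨rfl, by simpa using ha⟩]
        have hqR : (q:ℝ) ≠ 0 := by nlinarith
        push_cast
        rw [nsmul_eq_mul]
        field_simp
        ring
      · have h0 : wiC q W 1 [a] = 0 := by
          rw [wiC, if_neg]; rintro ⟨-, h⟩; simp at h; omega
        rw [h0]
        apply Finset.sum_eq_zero
        intro c _
        apply wiC_zero_of q W 2 (by omega)
        rintro ⟨-, -, hcol⟩
        exact ha (hcol a (by simp))
    | (j+1), ih =>
      -- step case
      have ih' : ∀ z : List ℕ, z.length = j + 1 →
          ∑ c ∈ Finset.range q, wiC q W (j + 2) (c :: z) = wiC q W (j + 1) z :=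
        fun z hz => ih (by omega) z hz
      show ∑ c ∈ Finset.range q, wiC q W (j + 3) (c :: x) = wiC q W (j + 2) x
      by_cases hval : x.Chain' (· ≠ ·) ∧ ∀ c ∈ x, c < q
      · obtain ⟨hch, hcol⟩ := hval
        cases x with
        | nil => simp at hx
        | cons a t =>
          have hx' : t.length = j + 1 := by simpa using hx
          have ha : a < q := hcol a (by simp)
          set D1 : ℝ := 2 * ((q : ℝ) - 1) + ((j:ℕ) + 1 : ℕ) * ((q : ℝ) - 2) with hD1
          set D0 : ℝ := 2 * ((q : ℝ) - 1) + ((j:ℕ) : ℕ) * ((q : ℝ) - 2) with hD0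
          have hD1pos : 0 < D1 := by rw [hD1]; push_cast; nlinarith
          have hD0pos : 0 < D0 := by rw [hD0]; push_cast; nlinarith
          set P : ℝ := wiC q W (j + 2) (a :: t) with hP
          have key : ∀ c ∈ Finset.range q, wiC q W (j + 3) (c :: a :: t) =
              if c = a then 0 else
                (∑ i ∈ Finset.range (j + 2), wiC q W (j + 2) (c :: (a :: t).eraseIdx i) + P)
                  / D1 := by
            intro c hc
            rw [Finset.mem_range] at hc
            by_cases hca : c = a
            · subst hca
              rw [if_pos rfl]
              apply wiC_zero_of q W (j + 3) (by omega)
              rintro ⟨-, hch2, -⟩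
              exact (List.isChain_cons_cons.mp hch2).1 rfl
            · rw [if_neg hca]
              have h2 : wiC q W (j + 3) (c :: a :: t) =
                  if (c :: a :: t).length = j + 3 ∧ (c :: a :: t).Chain' (· ≠ ·) ∧
                      ∀ z ∈ (c :: a :: t), z < q then
                    (∑ i ∈ Finset.range (j + 3),
                        wiC q W (j + 2) ((c :: a :: t).eraseIdx i)) / D1
                  else 0 := wiC_two q hq (j + 1) (c :: a :: t)
              rw [h2, if_pos ⟨by simp [hx'], List.isChain_cons_cons.mpr ⟨hca, hch⟩,
                List.forall_mem_cons.mpr ⟨hc, hcol⟩⟩]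
              congr 1
              rw [Finset.sum_range_succ']
              simp only [List.eraseIdx_cons_zero, List.eraseIdx_cons_succ]
              rfl
          rw [Finset.sum_congr rfl key]
          have key2 : ∀ c ∈ Finset.range q,
              (if c = a then 0 else
                (∑ i ∈ Finset.range (j + 2), wiC q W (j + 2) (c :: (a :: t).eraseIdx i) + P) / D1)
              = (∑ i ∈ Finset.range (j + 2), wiC q W (j + 2) (c :: (a :: t).eraseIdx i) + P) / D1
                - (if c = a then
                    (∑ i ∈ Finset.range (j + 2),
                      wiC q W (j + 2) (c :: (a :: t).eraseIdx i) + P) / D1 else 0) := by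
            intro c _
            by_cases hca : c = a <;> simp [hca]
          rw [Finset.sum_congr rfl key2, Finset.sum_sub_distrib,
            Finset.sum_ite_eq' (Finset.range q) a, if_pos (Finset.mem_range.mpr ha)]
          -- compute the main sum
          have hmain : ∑ c ∈ Finset.range q,
              (∑ i ∈ Finset.range (j + 2), wiC q W (j + 2) (c :: (a :: t).eraseIdx i) + P) / D1
              = ((D0 * P + (q:ℝ) * P)) / D1 := by
            rw [← Finset.sum_div]
            congr 1
            rw [Finset.sum_add_distrib, Finset.sum_const, Finset.card_range, nsmul_eq_mul]
            congr 1
            rw [Finset.sum_comm]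
            have hinner : ∀ i ∈ Finset.range (j + 2),
                ∑ c ∈ Finset.range q, wiC q W (j + 2) (c :: (a :: t).eraseIdx i)
                  = wiC q W (j + 1) ((a :: t).eraseIdx i) := by
              intro i hi
              rw [Finset.mem_range] at hi
              apply ih'
              rw [List.length_eraseIdx]
              simp [hx']
              omega
            rw [Finset.sum_congr rfl hinner]
            -- this sum equals D0 * P by the recursion for (a :: t)
            have h3 : wiC q W (j + 2) (a :: t) =
                if (a :: t).length = j + 2 ∧ (a :: t).Chain' (· ≠ ·) ∧ ∀ z ∈ (a :: t), z < q then
                  (∑ i ∈ Finset.range (j + 2), wiC q W (j + 1) ((a :: t).eraseIdx i)) / D0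
                else 0 := wiC_two q hq j (a :: t)
            rw [if_pos ⟨by simp [hx'], hch, hcol⟩] at h3
            rw [hP, h3]
            field_simp
          rw [hmain]
          -- compute the subtracted term
          have hsub : (∑ i ∈ Finset.range (j + 2), wiC q W (j + 2) (a :: (a :: t).eraseIdx i) + P)
              / D1 = 2 * P / D1 := by
            congr 1
            rw [Finset.sum_range_succ']
            simp only [List.eraseIdx_cons_zero, List.eraseIdx_cons_succ]
            have hz : ∀ i ∈ Finset.range (j + 1),
                wiC q W (j + 2) (a :: a :: t.eraseIdx i) = 0 := by
              intro i _
              apply wiC_zero_of q W (j + 2) (by omega)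
              rintro ⟨-, hch2, -⟩
              exact (List.isChain_cons_cons.mp hch2).1 rfl
            rw [Finset.sum_congr rfl hz, Finset.sum_const_zero]
            rw [← hP]
            ring
          rw [hsub]
          have hDrel : D1 = D0 + ((q:ℝ) - 2) := by rw [hD1, hD0]; push_cast; ring
          rw [hDrel]
          have hne : D0 + ((q:ℝ) - 2) ≠ 0 := by rw [← hDrel]; exact ne_of_gt hD1pos
          field_simp
          ring
      · have h0 : wiC q W (j + 2) x = 0 := by
          apply wiC_zero_of q W (j + 2) (by omega)
          rintro ⟨-, h1, h2⟩
          exact hval ⟨h1, h2⟩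
        rw [h0]
        apply Finset.sum_eq_zero
        intro c _
        apply wiC_zero_of q W (j + 3) (by omega)
        rintro ⟨-, h1, h2⟩
        exact hval ⟨(List.isChain_cons.mp h1).2, fun z hz => h2 z (by simp [hz])⟩

lemma wiC_snoc_sum (q : ℕ) (hq : 3 ≤ q) :
    ∀ m : ℕ, 1 ≤ m → ∀ x : List ℕ, x.length = m →
      ∑ c ∈ Finset.range q, wiC q (((q : ℝ) - 1) / ((q : ℝ) - 2)) (m + 1) (x ++ [c])
        = wiC q (((q : ℝ) - 1) / ((q : ℝ) - 2)) m x := by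
  have hq3 : (3:ℝ) ≤ (q:ℝ) := by exact_mod_cast hq
  have hq2 : (q : ℝ) - 2 ≠ 0 := by nlinarith
  have hq1 : (q : ℝ) - 1 ≠ 0 := by nlinarith
  set W : ℝ := ((q : ℝ) - 1) / ((q : ℝ) - 2) with hWdef
  intro m
  induction m with
  | zero => intro h; omega
  | succ k ih =>
    intro _ x hx
    match k, ih with
    | 0, _ =>
      obtain ⟨a, rfl⟩ := List.length_eq_one_iff.mp hx
      show ∑ c ∈ Finset.range q, wiC q W (0 + 2) ([a] ++ [c]) = wiC q W 1 [a]
      by_cases ha : a < q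
      · have key : ∀ c ∈ Finset.range q, wiC q W (0 + 2) ([a] ++ [c]) =
            if c = a then 0 else (2 / (q:ℝ)) / (2 * ((q : ℝ) - 1) + (0:ℕ) * ((q : ℝ) - 2)) := by
          intro c hc
          rw [Finset.mem_range] at hc
          rw [wiC_two q hq 0]
          by_cases hca : c = a
          · subst hca
            rw [if_pos rfl, if_neg]
            rintro ⟨-, hch, -⟩
            exact (List.isChain_cons_cons.mp hch).1 rfl
          · rw [if_neg hca, if_pos ⟨rfl, List.isChain_cons_cons.mpr ⟨Ne.symm hca, List.isChain_singleton c⟩,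
              by simp; omega⟩]
            congr 1
            rw [Finset.sum_range_succ, Finset.sum_range_succ, Finset.sum_range_zero]
            simp only [List.singleton_append, List.eraseIdx_cons_zero, List.eraseIdx_cons_succ]
            rw [wiC, wiC, if_pos ⟨rfl, by simpa using hc⟩, if_pos ⟨rfl, by simpa using ha⟩]
            ring
        rw [Finset.sum_congr rfl key]
        have key2 : ∀ c ∈ Finset.range q,
            (if c = a then 0 else (2 / (q:ℝ)) / (2 * ((q : ℝ) - 1) + (0:ℕ) * ((q : ℝ) - 2)))
            = (2 / (q:ℝ)) / (2 * ((q : ℝ) - 1) + (0:ℕ) * ((q : ℝ) - 2))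
              - (if c = a then (2 / (q:ℝ)) / (2 * ((q : ℝ) - 1) + (0:ℕ) * ((q : ℝ) - 2)) else 0) := by
          intro c _
          by_cases hca : c = a <;> simp [hca]
        rw [Finset.sum_congr rfl key2, Finset.sum_sub_distrib, Finset.sum_const,
          Finset.sum_ite_eq' (Finset.range q) a, if_pos (Finset.mem_range.mpr ha),
          Finset.card_range]
        rw [wiC, if_pos ⟨rfl, by simpa using ha⟩]
        have hqR : (q:ℝ) ≠ 0 := by nlinarith
        push_cast
        rw [nsmul_eq_mul]
        field_simp
        ring
      · have h0 : wiC q W 1 [a] = 0 := by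
          rw [wiC, if_neg]; rintro ⟨-, h⟩; simp at h; omega
        rw [h0]
        apply Finset.sum_eq_zero
        intro c _
        apply wiC_zero_of q W 2 (by omega)
        rintro ⟨-, -, hcol⟩
        exact ha (hcol a (by simp))
    | (j+1), ih =>
      have ih' : ∀ z : List ℕ, z.length = j + 1 →
          ∑ c ∈ Finset.range q, wiC q W (j + 2) (z ++ [c]) = wiC q W (j + 1) z :=
        fun z hz => ih (by omega) z hz
      show ∑ c ∈ Finset.range q, wiC q W (j + 3) (x ++ [c]) = wiC q W (j + 2) x
      by_cases hval : x.Chain' (· ≠ ·) ∧ ∀ c ∈ x, c < q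
      · obtain ⟨hch, hcol⟩ := hval
        rcases List.eq_nil_or_concat x with rfl | ⟨t, b, rfl⟩
        · simp at hx
        rw [List.concat_eq_append] at *
        have hx2 : (t ++ [b]).length = j + 2 := by simpa using hx
        have hxt : t.length = j + 1 := by simp at hx2; omega
        have hb : b < q := hcol b (by simp)
        set D1 : ℝ := 2 * ((q : ℝ) - 1) + ((j:ℕ) + 1 : ℕ) * ((q : ℝ) - 2) with hD1
        set D0 : ℝ := 2 * ((q : ℝ) - 1) + ((j:ℕ) : ℕ) * ((q : ℝ) - 2) with hD0
        have hD1pos : 0 < D1 := by rw [hD1]; push_cast; nlinarith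
        have hD0pos : 0 < D0 := by rw [hD0]; push_cast; nlinarith
        set P : ℝ := wiC q W (j + 2) (t ++ [b]) with hP
        have herase_last : ∀ c : ℕ, ((t ++ [b]) ++ [c]).eraseIdx (j + 2) = t ++ [b] := by
          intro c
          rw [List.eraseIdx_append_of_length_le (by omega)]
          simp [hx2]
        have key : ∀ c ∈ Finset.range q, wiC q W (j + 3) ((t ++ [b]) ++ [c]) =
            if c = b then 0 else
              (∑ i ∈ Finset.range (j + 2), wiC q W (j + 2) ((t ++ [b]).eraseIdx i ++ [c]) + P)
                / D1 := by
          intro c hc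
          rw [Finset.mem_range] at hc
          by_cases hcb : c = b
          · subst hcb
            rw [if_pos rfl]
            apply wiC_zero_of q W (j + 3) (by omega)
            rintro ⟨-, hch2, -⟩
            rcases List.isChain_append.mp hch2 with ⟨-, -, hl⟩
            exact hl c (by rw [List.getLast?_concat]; rfl) c rfl rfl
          · rw [if_neg hcb]
            have h2 : wiC q W (j + 3) ((t ++ [b]) ++ [c]) =
                if ((t ++ [b]) ++ [c]).length = j + 3 ∧ ((t ++ [b]) ++ [c]).Chain' (· ≠ ·) ∧
                    ∀ z ∈ ((t ++ [b]) ++ [c]), z < q then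
                  (∑ i ∈ Finset.range (j + 3),
                      wiC q W (j + 2) (((t ++ [b]) ++ [c]).eraseIdx i)) / D1
                else 0 := wiC_two q hq (j + 1) ((t ++ [b]) ++ [c])
            have hchx : ((t ++ [b]) ++ [c]).Chain' (· ≠ ·) := by
              rw [List.Chain', List.isChain_append]
              refine ⟨hch, List.isChain_singleton c, ?_⟩
              intro z hz y hy
              rw [List.getLast?_concat] at hz
              simp at hz hy
              subst hz; subst hy
              exact fun h => hcb (h.symm)
            rw [h2, if_pos ⟨by simp [hxt], hchx, by
              intro z hz
              rcases List.mem_append.mp hz with h | h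
              · exact hcol z h
              · simp at h; omega⟩]
            congr 1
            rw [Finset.sum_range_succ, herase_last c]
            have hsh : ∀ i ∈ Finset.range (j + 2),
                wiC q W (j + 2) (((t ++ [b]) ++ [c]).eraseIdx i)
                  = wiC q W (j + 2) ((t ++ [b]).eraseIdx i ++ [c]) := by
              intro i hi
              rw [Finset.mem_range] at hi
              rw [List.eraseIdx_append_of_lt_length (by omega)]
            rw [Finset.sum_congr rfl hsh]
        rw [Finset.sum_congr rfl key]
        have key2 : ∀ c ∈ Finset.range q,
            (if c = b then 0 else
              (∑ i ∈ Finset.range (j + 2), wiC q W (j + 2) ((t ++ [b]).eraseIdx i ++ [c]) + P) / D1)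
            = (∑ i ∈ Finset.range (j + 2), wiC q W (j + 2) ((t ++ [b]).eraseIdx i ++ [c]) + P) / D1
              - (if c = b then
                  (∑ i ∈ Finset.range (j + 2),
                    wiC q W (j + 2) ((t ++ [b]).eraseIdx i ++ [c]) + P) / D1 else 0) := by
          intro c _
          by_cases hcb : c = b <;> simp [hcb]
        rw [Finset.sum_congr rfl key2, Finset.sum_sub_distrib,
          Finset.sum_ite_eq' (Finset.range q) b, if_pos (Finset.mem_range.mpr hb)]
        have hmain : ∑ c ∈ Finset.range q,
            (∑ i ∈ Finset.range (j + 2), wiC q W (j + 2) ((t ++ [b]).eraseIdx i ++ [c]) + P) / D1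
            = ((D0 * P + (q:ℝ) * P)) / D1 := by
          rw [← Finset.sum_div]
          congr 1
          rw [Finset.sum_add_distrib, Finset.sum_const, Finset.card_range, nsmul_eq_mul]
          congr 1
          rw [Finset.sum_comm]
          have hinner : ∀ i ∈ Finset.range (j + 2),
              ∑ c ∈ Finset.range q, wiC q W (j + 2) ((t ++ [b]).eraseIdx i ++ [c])
                = wiC q W (j + 1) ((t ++ [b]).eraseIdx i) := by
            intro i hi
            rw [Finset.mem_range] at hi
            apply ih'
            rw [List.length_eraseIdx]
            simp [hx2]
            omega
          rw [Finset.sum_congr rfl hinner]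
          have h3 : wiC q W (j + 2) (t ++ [b]) =
              if (t ++ [b]).length = j + 2 ∧ (t ++ [b]).Chain' (· ≠ ·) ∧
                  ∀ z ∈ (t ++ [b]), z < q then
                (∑ i ∈ Finset.range (j + 2), wiC q W (j + 1) ((t ++ [b]).eraseIdx i)) / D0
              else 0 := wiC_two q hq j (t ++ [b])
          rw [if_pos ⟨hx2, hch, hcol⟩] at h3
          rw [hP, h3]
          field_simp
        rw [hmain]
        have hsub : (∑ i ∈ Finset.range (j + 2),
            wiC q W (j + 2) ((t ++ [b]).eraseIdx i ++ [b]) + P) / D1 = 2 * P / D1 := by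
          congr 1
          rw [Finset.sum_range_succ]
          have hlast : (t ++ [b]).eraseIdx (j + 1) = t := by
            rw [List.eraseIdx_append_of_length_le (by omega)]
            simp [hxt]
          rw [hlast]
          have hz : ∀ i ∈ Finset.range (j + 1),
              wiC q W (j + 2) ((t ++ [b]).eraseIdx i ++ [b]) = 0 := by
            intro i hi
            rw [Finset.mem_range] at hi
            rw [List.eraseIdx_append_of_lt_length (by omega)]
            apply wiC_zero_of q W (j + 2) (by omega)
            rintro ⟨-, hch2, -⟩
            rcases List.isChain_append.mp hch2 with ⟨-, -, hl⟩
            exact hl b (by rw [List.getLast?_concat]; rfl) b rfl rfl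
          rw [Finset.sum_congr rfl hz, Finset.sum_const_zero]
          rw [← hP]
          ring
        rw [hsub]
        have hDrel : D1 = D0 + ((q:ℝ) - 2) := by rw [hD1, hD0]; push_cast; ring
        rw [hDrel]
        have hne : D0 + ((q:ℝ) - 2) ≠ 0 := by rw [← hDrel]; exact ne_of_gt hD1pos
        field_simp
        ring
      · have h0 : wiC q W (j + 2) x = 0 := by
          apply wiC_zero_of q W (j + 2) (by omega)
          rintro ⟨-, h1, h2⟩
          exact hval ⟨h1, h2⟩
        rw [h0]
        apply Finset.sum_eq_zero
        intro c _
        apply wiC_zero_of q W (j + 3) (by omega)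
        rintro ⟨-, h1, h2⟩
        refine hval ⟨(List.isChain_append.mp h1).1, fun z hz => h2 z (by simp [hz])⟩

lemma mem_colorings {q n : ℕ} {l : List ℕ} :
    l ∈ colorings q n ↔ l.length = n ∧ ∀ c ∈ l, c < q := by
  unfold colorings
  rw [Finset.mem_image]
  constructor
  · rintro ⟨f, -, rfl⟩
    refine ⟨by simp, ?_⟩
    intro c hc
    rw [List.mem_ofFn] at hc
    obtain ⟨i, rfl⟩ := hc
    exact (f i).isLt
  · rintro ⟨hlen, hlt⟩
    subst hlen
    refine ⟨fun i => ⟨l.get i, hlt _ (List.get_mem l i)⟩, Finset.mem_univ _, ?_⟩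
    simpa using List.ofFn_get l

lemma colorings_cons (q n : ℕ) :
    colorings q (n + 1)
      = (Finset.range q ×ˢ colorings q n).image (fun p : ℕ × List ℕ => p.1 :: p.2) := by
  ext l
  rw [mem_colorings, Finset.mem_image]
  constructor
  · rintro ⟨hlen, hcol⟩
    cases l with
    | nil => simp at hlen
    | cons a t =>
      refine ⟨(a, t), ?_, rfl⟩
      rw [Finset.mem_product]
      exact ⟨Finset.mem_range.mpr (hcol a (by simp)),
        mem_colorings.mpr ⟨by simpa using hlen, fun c hc => hcol c (by simp [hc])⟩⟩
  · rintro ⟨⟨a, t⟩, hmem, rfl⟩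
    rw [Finset.mem_product, Finset.mem_range] at hmem
    obtain ⟨ha, ht⟩ := hmem
    rw [mem_colorings] at ht
    exact ⟨by simp [ht.1], List.forall_mem_cons.mpr ⟨ha, ht.2⟩⟩

lemma colorings_snoc (q n : ℕ) :
    colorings q (n + 1)
      = (Finset.range q ×ˢ colorings q n).image (fun p : ℕ × List ℕ => p.2 ++ [p.1]) := by
  ext l
  rw [mem_colorings, Finset.mem_image]
  constructor
  · rintro ⟨hlen, hcol⟩
    rcases List.eq_nil_or_concat l with rfl | ⟨t, b, rfl⟩
    · simp at hlen
    rw [List.concat_eq_append] at *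
    refine ⟨(b, t), ?_, rfl⟩
    rw [Finset.mem_product]
    refine ⟨Finset.mem_range.mpr (hcol b (by simp)),
      mem_colorings.mpr ⟨by simp at hlen ⊢; omega, fun c hc => hcol c (by simp [hc])⟩⟩
  · rintro ⟨⟨a, t⟩, hmem, rfl⟩
    rw [Finset.mem_product, Finset.mem_range] at hmem
    obtain ⟨ha, ht⟩ := hmem
    rw [mem_colorings] at ht
    constructor
    · simp [ht.1]
    · intro c hc
      rcases List.mem_append.mp hc with h | h
      · exact ht.2 c h
      · simp at h; omega

lemma sum_colorings_cons (q n : ℕ) (f : List ℕ → ℝ) :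
    ∑ x ∈ colorings q (n + 1), f x
      = ∑ c ∈ Finset.range q, ∑ x ∈ colorings q n, f (c :: x) := by
  rw [colorings_cons, Finset.sum_image, Finset.sum_product]
  rintro ⟨a, t⟩ - ⟨b, u⟩ - h
  simp only [List.cons.injEq] at h
  simp [Prod.ext_iff, h.1, h.2]

lemma sum_colorings_snoc (q n : ℕ) (f : List ℕ → ℝ) :
    ∑ x ∈ colorings q (n + 1), f x
      = ∑ c ∈ Finset.range q, ∑ x ∈ colorings q n, f (x ++ [c]) := by
  rw [colorings_snoc, Finset.sum_image, Finset.sum_product]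
  rintro ⟨a, t⟩ hm ⟨b, u⟩ hm' h
  rw [Finset.mem_coe, Finset.mem_product] at hm hm'
  have ht : t.length = n := (mem_colorings.mp hm.2).1
  have hu : u.length = n := (mem_colorings.mp hm'.2).1
  simp only at h
  obtain ⟨h1, h2⟩ := List.append_inj h (ht.trans hu.symm)
  simp at h2
  simp [Prod.ext_iff, h1, h2]

lemma wiC_take (q : ℕ) (hq : 3 ≤ q) (n : ℕ) (hn : 1 ≤ n) (y : List ℕ) (hy : y.length = n) :
    ∀ m : ℕ, (∑ x ∈ colorings q (n + m),
        if x.take n = y then wiC q (((q : ℝ) - 1) / ((q : ℝ) - 2)) (n + m) x else 0)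
      = wiC q (((q : ℝ) - 1) / ((q : ℝ) - 2)) n y := by
  intro m
  induction m with
  | zero =>
    have key : ∀ x ∈ colorings q (n + 0),
        (if x.take n = y then wiC q (((q : ℝ) - 1) / ((q : ℝ) - 2)) (n + 0) x else 0)
          = (if x = y then wiC q (((q : ℝ) - 1) / ((q : ℝ) - 2)) (n + 0) x else 0) := by
      intro x hx
      have hlen : x.length = n := by simpa using (mem_colorings.mp hx).1
      rw [List.take_of_length_le (by omega)]
    rw [Finset.sum_congr rfl key, Finset.sum_ite_eq' (colorings q (n + 0)) y]
    by_cases hmem : y ∈ colorings q (n + 0)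
    · rw [if_pos hmem]
      norm_num
    · rw [if_neg hmem]
      symm
      apply wiC_zero_of q _ n hn
      rintro ⟨-, -, h3⟩
      exact hmem (mem_colorings.mpr ⟨by omega, h3⟩)
  | succ m ihm =>
    have harith : n + (m + 1) = (n + m) + 1 := by omega
    rw [harith, sum_colorings_snoc]
    have key : ∀ c ∈ Finset.range q, ∑ x ∈ colorings q (n + m),
        (if (x ++ [c]).take n = y
          then wiC q (((q : ℝ) - 1) / ((q : ℝ) - 2)) (n + m + 1) (x ++ [c]) else 0)
        = ∑ x ∈ colorings q (n + m),
        (if x.take n = y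
          then wiC q (((q : ℝ) - 1) / ((q : ℝ) - 2)) (n + m + 1) (x ++ [c]) else 0) := by
      intro c _
      apply Finset.sum_congr rfl
      intro x hx
      have hlen : x.length = n + m := (mem_colorings.mp hx).1
      rw [List.take_append_of_le_length (by omega)]
    rw [Finset.sum_congr rfl key, Finset.sum_comm]
    have key2 : ∀ x ∈ colorings q (n + m), ∑ c ∈ Finset.range q,
        (if x.take n = y
          then wiC q (((q : ℝ) - 1) / ((q : ℝ) - 2)) (n + m + 1) (x ++ [c]) else 0)
        = (if x.take n = y
          then wiC q (((q : ℝ) - 1) / ((q : ℝ) - 2)) (n + m) x else 0) := by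
      intro x hx
      have hlen : x.length = n + m := (mem_colorings.mp hx).1
      by_cases hcond : x.take n = y
      · simp only [if_pos hcond]
        exact wiC_snoc_sum q hq (n + m) (by omega) x hlen
      · simp [hcond]
    rw [Finset.sum_congr rfl key2]
    exact ihm


/-- consistency of the weighted-insertion colorings at the
critical weight `w* = (q-1)/(q-2)`: the restriction of the WI coloring on a
long interval (of length `N`) to a subinterval of length `n` (starting at
offset `o`) has the same law as the WI coloring on the subinterval. -/
theorem wiC_consistent (q : ℕ) (hq : 3 ≤ q) (N n o : ℕ) (hn : 1 ≤ n) (ho : o + n ≤ N) :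
    ∀ y : List ℕ, y.length = n →
      (∑ x ∈ colorings q N,
          if (x.drop o).take n = y then wiC q (((q : ℝ) - 1) / ((q : ℝ) - 2)) N x else 0)
        = wiC q (((q : ℝ) - 1) / ((q : ℝ) - 2)) n y := by
  intro y hy
  have main : ∀ o' : ℕ, (∑ x ∈ colorings q (o' + (n + (N - o - n))),
      if (x.drop o').take n = y
        then wiC q (((q : ℝ) - 1) / ((q : ℝ) - 2)) (o' + (n + (N - o - n))) x else 0)
      = wiC q (((q : ℝ) - 1) / ((q : ℝ) - 2)) n y := by
    intro o'
    induction o' with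
    | zero =>
      simpa using wiC_take q hq n hn y hy (N - o - n)
    | succ k ihk =>
      have harith : (k + 1) + (n + (N - o - n)) = (k + (n + (N - o - n))) + 1 := by omega
      rw [harith, sum_colorings_cons]
      have key : ∀ c ∈ Finset.range q, ∑ x ∈ colorings q (k + (n + (N - o - n))),
          (if ((c :: x).drop (k + 1)).take n = y
            then wiC q (((q : ℝ) - 1) / ((q : ℝ) - 2)) (k + (n + (N - o - n)) + 1) (c :: x)
            else 0)
          = ∑ x ∈ colorings q (k + (n + (N - o - n))),
          (if (x.drop k).take n = y
            then wiC q (((q : ℝ) - 1) / ((q : ℝ) - 2)) (k + (n + (N - o - n)) + 1) (c :: x)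
            else 0) := by
        intro c _
        apply Finset.sum_congr rfl
        intro x _
        rw [List.drop_succ_cons]
      rw [Finset.sum_congr rfl key, Finset.sum_comm]
      have key2 : ∀ x ∈ colorings q (k + (n + (N - o - n))), ∑ c ∈ Finset.range q,
          (if (x.drop k).take n = y
            then wiC q (((q : ℝ) - 1) / ((q : ℝ) - 2)) (k + (n + (N - o - n)) + 1) (c :: x)
            else 0)
          = (if (x.drop k).take n = y
            then wiC q (((q : ℝ) - 1) / ((q : ℝ) - 2)) (k + (n + (N - o - n))) x else 0) := by
        intro x hx
        have hlen : x.length = k + (n + (N - o - n)) := (mem_colorings.mp hx).1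
        by_cases hcond : (x.drop k).take n = y
        · simp only [if_pos hcond]
          exact wiC_cons_sum q hq (k + (n + (N - o - n))) (by omega) x hlen
        · simp [hcond]
      rw [Finset.sum_congr rfl key2]
      exact ihk
  have hN : N = o + (n + (N - o - n)) := by omega
  rw [hN]
  exact main o
end

section
/- In any solution of the insertion system with q ≥ 4 colors, every integer receives one of its first three favorite colors: K(i) ≤ 3 for all i. Consequently, if i is lucky, i.e. φ_{L(i)}(4) = φ_i(1) = φ_{R(i)}(4), then X_i = φ_i(1). -/
/-- `X : ℤ → Fin q` solves the insertion system of equations, relative to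
given left/right neighbour maps `L, R` and preference orders `φ`:
`X i = φ i (K i)` where `K i = min{k : X (L i) ≠ φ i k ≠ X (R i)}`. -/
def IsSolLR (q : ℕ) (φ : ℤ → Fin q → Fin q) (L R : ℤ → ℤ) (X : ℤ → Fin q) : Prop :=
  ∀ i : ℤ, ∃ k : Fin q, X i = φ i k ∧ X (L i) ≠ φ i k ∧ φ i k ≠ X (R i) ∧
    ∀ k' : Fin q, k' < k → (X (L i) = φ i k' ∨ φ i k' = X (R i))

/-- in any solution of the insertion system with `q ≥ 4` colors,
every integer receives one of its first three favorite colors (`K(i) ≤ 3`,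
i.e. index `≤ 2` in `0`-based notation); consequently, if `i` is lucky, i.e.
`φ_{L(i)}(4) = φ_i(1) = φ_{R(i)}(4)`, then `X_i = φ_i(1)`. -/
theorem solution_first_three_and_lucky
    (q : ℕ) (hq : 4 ≤ q) (U : ℤ → ℝ) (hU : ∀ i j : ℤ, i ≠ j → U i ≠ U j)
    (L R : ℤ → ℤ)
    (hL : ∀ i : ℤ, L i < i ∧ U (L i) < U i ∧ ∀ j, L i < j → j < i → U i ≤ U j)
    (hR : ∀ i : ℤ, i < R i ∧ U (R i) < U i ∧ ∀ j, i < j → j < R i → U i ≤ U j)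
    (φ : ℤ → Fin q → Fin q) (hφ : ∀ i, Function.Bijective (φ i))
    (X : ℤ → Fin q) (hX : IsSolLR q φ L R X) :
    (∀ i : ℤ, ∃ k : Fin q, (k : ℕ) ≤ 2 ∧ X i = φ i k) ∧
    (∀ i : ℤ,
      φ (L i) ⟨3, by omega⟩ = φ i ⟨0, by omega⟩ →
      φ i ⟨0, by omega⟩ = φ (R i) ⟨3, by omega⟩ →
      X i = φ i ⟨0, by omega⟩) := by
  have key : ∀ i : ℤ, ∃ k : Fin q, (k : ℕ) ≤ 2 ∧ X i = φ i k := by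
    intro i
    obtain ⟨k, hXi, _, _, hmin⟩ := hX i
    refine ⟨k, ?_, hXi⟩
    by_contra h
    push_neg at h
    have hinj := (hφ i).1
    have h0 := hmin ⟨0, by omega⟩ (by simp only [Fin.lt_def]; omega)
    have h1 := hmin ⟨1, by omega⟩ (by simp only [Fin.lt_def]; omega)
    have h2 := hmin ⟨2, by omega⟩ (by simp only [Fin.lt_def]; omega)
    rcases h0 with h0 | h0 <;> rcases h1 with h1 | h1 <;> rcases h2 with h2 | h2 <;>
      first
      | (have := hinj (h0.symm.trans h1); simp [Fin.ext_iff] at this)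
      | (have := hinj (h0.symm.trans h2); simp [Fin.ext_iff] at this)
      | (have := hinj (h1.symm.trans h2); simp [Fin.ext_iff] at this)
      | (have := hinj (h0.trans h1.symm); simp [Fin.ext_iff] at this)
      | (have := hinj (h0.trans h2.symm); simp [Fin.ext_iff] at this)
      | (have := hinj (h1.trans h2.symm); simp [Fin.ext_iff] at this)
  refine ⟨key, ?_⟩
  intro i hl hr
  obtain ⟨kL, hkL, hXL⟩ := key (L i)
  obtain ⟨kR, hkR, hXR⟩ := key (R i)
  have hXLne : X (L i) ≠ φ i ⟨0, by omega⟩ := by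
    rw [hXL, ← hl]
    intro h
    have := (hφ (L i)).1 h
    simp [Fin.ext_iff] at this
    omega
  have hXRne : φ i ⟨0, by omega⟩ ≠ X (R i) := by
    rw [hXR, hr]
    intro h
    have := (hφ (R i)).1 h
    simp [Fin.ext_iff] at this
    omega
  obtain ⟨k, hXi, _, _, hmin⟩ := hX i
  rcases eq_or_ne k ⟨0, by omega⟩ with hk0 | hk
  · rw [hk0] at hXi; exact hXi
  · have hpos : (⟨0, by omega⟩ : Fin q) < k := by
      have hknz : (k : ℕ) ≠ 0 := fun h => hk (Fin.ext h)
      simp only [Fin.lt_def]; omega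
    rcases hmin ⟨0, by omega⟩ hpos with h | h
    · exact absurd h hXLne
    · exact absurd h hXRne
end

section
/- Define T ≥ 1 as the smallest integer such that there exist integers A ≤ 0 ≤ B, lucky with respect to ((U_i, φ_i))_{i∈ℤ}, satisfying max{U_A, U_B} < min{U_i : A < i < B} and max{|L(A)|, |R(A)|, |L(B)|, |R(B)|} ≤ T. Then the value X_0 of the unique solution to the insertion system is a measurable function of ((U_i, φ_i))_{|i| ≤ T} alone; that is, the coloring is a finitary factor of the i.i.d. process ((U_i, φ_i))_{i∈ℤ} with coding radius at most T. -/
lemma not_fourth {q : ℕ} (hq : 4 ≤ q) (φ : ℤ → Fin q → Fin q) (L R : ℤ → ℤ)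
    (hφ : ∀ i, Function.Bijective (φ i)) (X : ℤ → Fin q) (hX : IsSolLR q φ L R X)
    (i : ℤ) : X i ≠ φ i ⟨3, by omega⟩ := by
  obtain ⟨k, hk, -, -, hmin⟩ := hX i
  have inj := (hφ i).injective
  have hk3 : (k : ℕ) < 3 := by
    by_contra h
    push_neg at h
    have h0 := hmin ⟨0, by omega⟩ (by simp [Fin.lt_def]; omega)
    have h1 := hmin ⟨1, by omega⟩ (by simp [Fin.lt_def]; omega)
    have h2 := hmin ⟨2, by omega⟩ (by simp [Fin.lt_def]; omega)
    rcases h0 with h0 | h0 <;> rcases h1 with h1 | h1 <;> rcases h2 with h2 | h2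
    · exact absurd (inj (h0.symm.trans h1)) (by simp [Fin.ext_iff])
    · exact absurd (inj (h0.symm.trans h1)) (by simp [Fin.ext_iff])
    · exact absurd (inj (h0.symm.trans h2)) (by simp [Fin.ext_iff])
    · exact absurd (inj (h1.trans h2.symm)) (by simp [Fin.ext_iff])
    · exact absurd (inj (h1.symm.trans h2)) (by simp [Fin.ext_iff])
    · exact absurd (inj (h0.trans h2.symm)) (by simp [Fin.ext_iff])
    · exact absurd (inj (h0.trans h1.symm)) (by simp [Fin.ext_iff])
    · exact absurd (inj (h0.trans h1.symm)) (by simp [Fin.ext_iff])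
  intro h
  rw [hk] at h
  have := inj h
  simp [Fin.ext_iff] at this
  omega

lemma lucky_first {q : ℕ} (hq : 4 ≤ q) (φ : ℤ → Fin q → Fin q) (L R : ℤ → ℤ)
    (hφ : ∀ i, Function.Bijective (φ i)) (X : ℤ → Fin q) (hX : IsSolLR q φ L R X)
    (i : ℤ) (h1 : φ (L i) ⟨3, by omega⟩ = φ i ⟨0, by omega⟩)
    (h2 : φ i ⟨0, by omega⟩ = φ (R i) ⟨3, by omega⟩) :
    X i = φ i ⟨0, by omega⟩ := by
  have hLn := not_fourth hq φ L R hφ X hX (L i)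
  have hRn := not_fourth hq φ L R hφ X hX (R i)
  obtain ⟨k, hk, hkL, hkR, hmin⟩ := hX i
  have h0le : (⟨0, by omega⟩ : Fin q) ≤ k := by simp [Fin.le_def]
  rcases eq_or_lt_of_le h0le with h | h
  · rw [hk, ← h]
  · rcases hmin ⟨0, by omega⟩ h with hc | hc
    · exact absurd (hc.trans h1.symm) hLn
    · exact absurd (hc.symm.trans h2) hRn

lemma sol_unique {q : ℕ} (φg : Fin q → Fin q) (a b x x' : Fin q)
    (h : ∃ k, x = φg k ∧ a ≠ φg k ∧ φg k ≠ b ∧ ∀ k' : Fin q, k' < k → (a = φg k' ∨ φg k' = b))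
    (h' : ∃ k, x' = φg k ∧ a ≠ φg k ∧ φg k ≠ b ∧ ∀ k' : Fin q, k' < k → (a = φg k' ∨ φg k' = b)) :
    x = x' := by
  obtain ⟨k, hk, hkL, hkR, hm⟩ := h
  obtain ⟨k', hk', hkL', hkR', hm'⟩ := h'
  rcases lt_trichotomy k k' with hlt | heq | hlt
  · rcases hm' k hlt with hc | hc
    · exact absurd hc hkL
    · exact absurd hc hkR
  · rw [hk, hk', heq]
  · rcases hm k' hlt with hc | hc
    · exact absurd hc hkL'
    · exact absurd hc hkR'

lemma L_eq (U U' : ℤ → ℝ) (L L' : ℤ → ℤ)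
    (hL : ∀ i : ℤ, L i < i ∧ U (L i) < U i ∧ ∀ j, L i < j → j < i → U i ≤ U j)
    (hL' : ∀ i : ℤ, L' i < i ∧ U' (L' i) < U' i ∧ ∀ j, L' i < j → j < i → U' i ≤ U' j)
    (i : ℤ) (hwin : ∀ j, L i ≤ j → j ≤ i → U j = U' j) :
    L' i = L i := by
  obtain ⟨h1, h2, h3⟩ := hL i
  obtain ⟨h1', h2', h3'⟩ := hL' i
  rcases lt_trichotomy (L' i) (L i) with h | h | h
  · have hle := h3' (L i) h h1
    rw [← hwin (L i) le_rfl h1.le, ← hwin i h1.le le_rfl] at hle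
    linarith
  · exact h
  · have hle := h3 (L' i) h h1'
    rw [hwin (L' i) h.le h1'.le, hwin i h1.le le_rfl] at hle
    linarith

lemma R_eq (U U' : ℤ → ℝ) (R R' : ℤ → ℤ)
    (hR : ∀ i : ℤ, i < R i ∧ U (R i) < U i ∧ ∀ j, i < j → j < R i → U i ≤ U j)
    (hR' : ∀ i : ℤ, i < R' i ∧ U' (R' i) < U' i ∧ ∀ j, i < j → j < R' i → U' i ≤ U' j)
    (i : ℤ) (hwin : ∀ j, i ≤ j → j ≤ R i → U j = U' j) :
    R' i = R i := by
  obtain ⟨h1, h2, h3⟩ := hR i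
  obtain ⟨h1', h2', h3'⟩ := hR' i
  rcases lt_trichotomy (R i) (R' i) with h | h | h
  · have hle := h3' (R i) h1 h
    rw [← hwin (R i) h1.le le_rfl, ← hwin i le_rfl h1.le] at hle
    linarith
  · exact h.symm
  · have hle := h3 (R' i) h1' h
    rw [hwin (R' i) h1'.le h.le, hwin i le_rfl h1.le] at hle
    linarith

set_option maxHeartbeats 1000000 in
/-- the coloring is a finitary factor of `((U_i, φ_i))_{i∈ℤ}`
with coding radius at most `T`: if `t` witnesses the defining property of `T`
— there are lucky `A ≤ 0 ≤ B` (i.e. `φ_{L(A)}(4) = φ_A(1) = φ_{R(A)}(4)` and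
likewise for `B`) with `max{U_A, U_B} < min{U_i : A < i < B}` and
`max{|L(A)|,|R(A)|,|L(B)|,|R(B)|} ≤ t` — then the value `X_0` of any solution
of the insertion system is determined by the data `((U_i, φ_i))_{|i| ≤ t}`:
any two configurations agreeing on that window yield the same color at `0`. -/
theorem coding_radius_window_determines
    (q : ℕ) (hq : 4 ≤ q)
    (U U' : ℤ → ℝ)
    (hUinj : ∀ i j : ℤ, i ≠ j → U i ≠ U j) (hU'inj : ∀ i j : ℤ, i ≠ j → U' i ≠ U' j)
    (L R L' R' : ℤ → ℤ)
    (hL : ∀ i : ℤ, L i < i ∧ U (L i) < U i ∧ ∀ j, L i < j → j < i → U i ≤ U j)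
    (hR : ∀ i : ℤ, i < R i ∧ U (R i) < U i ∧ ∀ j, i < j → j < R i → U i ≤ U j)
    (hL' : ∀ i : ℤ, L' i < i ∧ U' (L' i) < U' i ∧ ∀ j, L' i < j → j < i → U' i ≤ U' j)
    (hR' : ∀ i : ℤ, i < R' i ∧ U' (R' i) < U' i ∧ ∀ j, i < j → j < R' i → U' i ≤ U' j)
    (φ φ' : ℤ → Fin q → Fin q)
    (hφ : ∀ i, Function.Bijective (φ i)) (hφ' : ∀ i, Function.Bijective (φ' i))
    (X X' : ℤ → Fin q)
    (hX : IsSolLR q φ L R X) (hX' : IsSolLR q φ' L' R' X')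
    (t : ℕ) (A B : ℤ) (hA0 : A ≤ 0) (h0B : 0 ≤ B)
    (hluckyA : φ (L A) ⟨3, by omega⟩ = φ A ⟨0, by omega⟩ ∧
      φ A ⟨0, by omega⟩ = φ (R A) ⟨3, by omega⟩)
    (hluckyB : φ (L B) ⟨3, by omega⟩ = φ B ⟨0, by omega⟩ ∧
      φ B ⟨0, by omega⟩ = φ (R B) ⟨3, by omega⟩)
    (hends : ∀ i : ℤ, A < i → i < B → U A < U i ∧ U B < U i)
    (hrad : |L A| ≤ (t : ℤ) ∧ |R A| ≤ (t : ℤ) ∧ |L B| ≤ (t : ℤ) ∧ |R B| ≤ (t : ℤ))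
    (hagree : ∀ i : ℤ, |i| ≤ (t : ℤ) → U i = U' i ∧ φ i = φ' i) :
    X 0 = X' 0 := by
  obtain ⟨hrLA, hrRA, hrLB, hrRB⟩ := hrad
  have hLA := abs_le.mp hrLA
  have hRA := abs_le.mp hrRA
  have hLB := abs_le.mp hrLB
  have hRB := abs_le.mp hrRB
  have hLAlt : L A < A := (hL A).1
  have hRAlt : A < R A := (hR A).1
  have hLBlt : L B < B := (hL B).1
  have hRBlt : B < R B := (hR B).1
  have hAmem : -(t : ℤ) ≤ A ∧ A ≤ (t : ℤ) := by omega
  have hBmem : -(t : ℤ) ≤ B ∧ B ≤ (t : ℤ) := by omega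
  have hwinU : ∀ j : ℤ, -(t : ℤ) ≤ j → j ≤ (t : ℤ) → U j = U' j :=
    fun j h1 h2 => (hagree j (abs_le.mpr ⟨h1, h2⟩)).1
  have hwinφ : ∀ j : ℤ, -(t : ℤ) ≤ j → j ≤ (t : ℤ) → φ j = φ' j :=
    fun j h1 h2 => (hagree j (abs_le.mpr ⟨h1, h2⟩)).2
  -- neighbour maps agree at A and B
  have hLA' : L' A = L A := L_eq U U' L L' hL hL' A (fun j h1 h2 => hwinU j (by omega) (by omega))
  have hRA' : R' A = R A := R_eq U U' R R' hR hR' A (fun j h1 h2 => hwinU j (by omega) (by omega))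
  have hLB' : L' B = L B := L_eq U U' L L' hL hL' B (fun j h1 h2 => hwinU j (by omega) (by omega))
  have hRB' : R' B = R B := R_eq U U' R R' hR hR' B (fun j h1 h2 => hwinU j (by omega) (by omega))
  -- lucky endpoints get favourite colour
  have hXA : X A = φ A ⟨0, by omega⟩ :=
    lucky_first hq φ L R hφ X hX A hluckyA.1 hluckyA.2
  have hXB : X B = φ B ⟨0, by omega⟩ :=
    lucky_first hq φ L R hφ X hX B hluckyB.1 hluckyB.2
  have hX'A : X' A = φ' A ⟨0, by omega⟩ := by
    apply lucky_first hq φ' L' R' hφ' X' hX' A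
    · rw [hLA', ← hwinφ (L A) (by omega) (by omega), ← hwinφ A (by omega) (by omega)]
      exact hluckyA.1
    · rw [hRA', ← hwinφ (R A) (by omega) (by omega), ← hwinφ A (by omega) (by omega)]
      exact hluckyA.2
  have hX'B : X' B = φ' B ⟨0, by omega⟩ := by
    apply lucky_first hq φ' L' R' hφ' X' hX' B
    · rw [hLB', ← hwinφ (L B) (by omega) (by omega), ← hwinφ B (by omega) (by omega)]
      exact hluckyB.1
    · rw [hRB', ← hwinφ (R B) (by omega) (by omega), ← hwinφ B (by omega) (by omega)]
      exact hluckyB.2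
  have main : ∀ n : ℕ, ∀ i : ℤ, A ≤ i → i ≤ B →
      ((Finset.Icc A B).filter (fun j => U j < U i)).card ≤ n → X i = X' i := by
    intro n
    induction n with
    | zero =>
      intro i hAi hiB hcard
      rcases eq_or_lt_of_le hAi with rfl | hAlt
      · rw [hXA, hX'A]
        exact congrFun (hwinφ A (by omega) (by omega)) _
      rcases eq_or_lt_of_le hiB with heq | hltB
      · rw [heq, hXB, hX'B]
        exact congrFun (hwinφ B (by omega) (by omega)) _
      exfalso
      have hmem : A ∈ (Finset.Icc A B).filter (fun j => U j < U i) := by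
        simp only [Finset.mem_filter, Finset.mem_Icc]
        exact ⟨⟨le_rfl, by omega⟩, (hends i hAlt hltB).1⟩
      have := Finset.card_pos.mpr ⟨A, hmem⟩
      omega
    | succ n ih =>
      intro i hAi hiB hcard
      rcases eq_or_lt_of_le hAi with rfl | hAlt
      · rw [hXA, hX'A]
        exact congrFun (hwinφ A (by omega) (by omega)) _
      rcases eq_or_lt_of_le hiB with heq | hltB
      · rw [heq, hXB, hX'B]
        exact congrFun (hwinφ B (by omega) (by omega)) _
      obtain ⟨hLi_lt, hLi_U, hLi_max⟩ := hL i
      obtain ⟨hRi_lt, hRi_U, hRi_min⟩ := hR i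
      have hALi : A ≤ L i := by
        by_contra h
        push_neg at h
        exact absurd (hLi_max A h hAlt) (not_le.mpr (hends i hAlt hltB).1)
      have hRiB : R i ≤ B := by
        by_contra h
        push_neg at h
        exact absurd (hRi_min B hltB h) (not_le.mpr (hends i hAlt hltB).2)
      have hcardL : ((Finset.Icc A B).filter (fun j => U j < U (L i))).card ≤ n := by
        have hss : (Finset.Icc A B).filter (fun j => U j < U (L i)) ⊂
            (Finset.Icc A B).filter (fun j => U j < U i) := by
          refine (Finset.ssubset_iff_of_subset ?_).mpr ⟨L i, ?_, ?_⟩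
          · intro j hj
            simp only [Finset.mem_filter] at hj ⊢
            exact ⟨hj.1, lt_trans hj.2 hLi_U⟩
          · simp only [Finset.mem_filter, Finset.mem_Icc]
            exact ⟨⟨hALi, by omega⟩, hLi_U⟩
          · simp only [Finset.mem_filter, Finset.mem_Icc]
            intro h
            exact lt_irrefl _ h.2
        have := Finset.card_lt_card hss
        omega
      have hcardR : ((Finset.Icc A B).filter (fun j => U j < U (R i))).card ≤ n := by
        have hss : (Finset.Icc A B).filter (fun j => U j < U (R i)) ⊂
            (Finset.Icc A B).filter (fun j => U j < U i) := by
          refine (Finset.ssubset_iff_of_subset ?_).mpr ⟨R i, ?_, ?_⟩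
          · intro j hj
            simp only [Finset.mem_filter] at hj ⊢
            exact ⟨hj.1, lt_trans hj.2 hRi_U⟩
          · simp only [Finset.mem_filter, Finset.mem_Icc]
            exact ⟨⟨by omega, hRiB⟩, hRi_U⟩
          · simp only [Finset.mem_filter, Finset.mem_Icc]
            intro h
            exact lt_irrefl _ h.2
        have := Finset.card_lt_card hss
        omega
      have hXL : X (L i) = X' (L i) := ih (L i) hALi (by omega) hcardL
      have hXR : X (R i) = X' (R i) := ih (R i) (by omega) hRiB hcardR
      have hLi' : L' i = L i :=
        L_eq U U' L L' hL hL' i (fun j h1 h2 => hwinU j (by omega) (by omega))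
      have hRi' : R' i = R i :=
        R_eq U U' R R' hR hR' i (fun j h1 h2 => hwinU j (by omega) (by omega))
      have hφi : φ' i = φ i := (hwinφ i (by omega) (by omega)).symm
      have h' := hX' i
      rw [hLi', hRi', hφi, ← hXL, ← hXR] at h'
      exact sol_unique (φ i) (X (L i)) (X (R i)) (X i) (X' i) (hX i) h'
  exact main ((Finset.Icc A B).filter (fun j => U j < U 0)).card 0 hA0 h0B le_rfl
end
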